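/- For any prae-dilator T and any Bachmann-Howard system (X, ι_X, L_X), the relation <_{ϑ_T(X)} is transitive; hence (ϑ_T(X), <_{ϑ_T(X)}) is a linear order. -/

import Mathlib

/-! Data for a Bachmann-Howard system: `X` is a linear order, `S` is the linear order
`T_X` (the value of a prae-dilator at `X`), whose elements `σ` simultaneously index the
terms `ϑσ` making up the set `ϑ_T(X)`.  So `supp : S → Finset X` is the support function
`supp^T_X`, `ι : X → S` is the function `ι_X : X → ϑ_T(X)` (identifying terms with their
indices), and `L : X → ℕ` is the length function `L_X`. -/
structure BHData (X S : Type) [LinearOrder X] [LinearOrder S] where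
  supp : S → Finset X
  ι : X → S
  L : X → ℕ

variable {X S : Type} [LinearOrder X] [LinearOrder S]

/-- The induced length function `L_{ϑ_T(X)}(ϑσ) = max{L_X(x) | x ∈ supp σ} + 1`
(with the maximum over the empty set being `0`). -/
def BHData.Lv (D : BHData X S) (σ : S) : ℕ := (D.supp σ).sup D.L + 1

/-- `(X, ι, L)` is a Bachmann-Howard system: `L_{ϑ_T(X)} ∘ ι_X = L_X`. -/
def BHData.IsBH (D : BHData X S) : Prop := ∀ x : X, D.Lv (D.ι x) = D.L x

/-- The recursively defined relation `ϑσ <_{ϑ_T(X)} ϑτ`: either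
(i) `σ <_{T_X} τ` and `ι_X(x) < ϑτ` for all `x ∈ supp σ`, or
(ii) `τ <_{T_X} σ` and `ϑσ ≤ ι_X(x)` for some `x ∈ supp τ`
(the clause (ii) is split according to `ϑσ < ι_X(x)` or `ϑσ = ι_X(x)`).
For a Bachmann-Howard system this least fixed point satisfies the defining
recursion, which is well-founded along `Lv`. -/
inductive BHData.lt (D : BHData X S) : S → S → Prop
  | left {σ τ : S} : σ < τ → (∀ x ∈ D.supp σ, D.lt (D.ι x) τ) → D.lt σ τ
  | right_lt {σ τ : S} (x : X) : τ < σ → x ∈ D.supp τ → D.lt σ (D.ι x) → D.lt σ τ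
  | right_eq {σ τ : S} (x : X) : τ < σ → x ∈ D.supp τ → σ = D.ι x → D.lt σ τ

/-! Everything is proved by induction on the sum of the lengths `Lv`, which drops strictly when
`ϑσ` is replaced by `ι x` for `x ∈ supp σ`: this is where `Lv ∘ ι = L` enters. Reading clause (ii)
as "`τ < σ` and `ϑσ ≤ ι x` for some `x ∈ supp τ`", transitivity is a case analysis on the clauses
of the two hypotheses, each case composing comparisons between terms of smaller total length.
The one case not of this form, (i) followed by (ii) with `ρ = τ`, is impossible: it yields
`ι y < ι y`. -/

namespace BHData

variable {D : BHData X S}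

theorem IsBH.Lv_ι_lt (hD : D.IsBH) {σ : S} {x : X} (hx : x ∈ D.supp σ) :
    D.Lv (D.ι x) < D.Lv σ := by
  rw [hD x]
  exact Nat.lt_succ_of_le (Finset.le_sup hx)

theorem lt_irrefl (σ : S) : ¬ D.lt σ σ := by
  rintro (⟨h, -⟩ | ⟨-, h, -, -⟩ | ⟨-, h, -, -⟩) <;> exact _root_.lt_irrefl σ h

theorem lt_of_le_ι {σ τ : S} {x : X} (hτσ : τ < σ) (hx : x ∈ D.supp τ)
    (h : D.lt σ (D.ι x) ∨ σ = D.ι x) : D.lt σ τ :=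
  h.elim (.right_lt x hτσ hx) (.right_eq x hτσ hx)

theorem lt_iff {σ τ : S} :
    D.lt σ τ ↔ (σ < τ ∧ ∀ x ∈ D.supp σ, D.lt (D.ι x) τ) ∨
      (τ < σ ∧ ∃ x ∈ D.supp τ, D.lt σ (D.ι x) ∨ σ = D.ι x) := by
  constructor
  · rintro (⟨h, H⟩ | ⟨x, h, hx, h'⟩ | ⟨x, h, hx, h'⟩)
    exacts [.inl ⟨h, H⟩, .inr ⟨h, x, hx, .inl h'⟩, .inr ⟨h, x, hx, .inr h'⟩]
  · rintro (⟨h, H⟩ | ⟨h, x, hx, h'⟩)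
    exacts [.left h H, lt_of_le_ι h hx h']

theorem IsBH.lt_trans (hD : D.IsBH) {ρ σ τ : S} (h₁ : D.lt ρ σ) (h₂ : D.lt σ τ) :
    D.lt ρ τ := by
  have lt_of_lt_of_le : ∀ {a b c : S}, D.Lv a + D.Lv b + D.Lv c < D.Lv ρ + D.Lv σ + D.Lv τ →
      D.lt a b → D.lt b c ∨ b = c → D.lt a c := by
    rintro a b c hn hab (hbc | rfl)
    exacts [IsBH.lt_trans hD hab hbc, hab]
  rcases lt_iff.1 h₁ with ⟨hρσ, H₁⟩ | ⟨hσρ, x, hx, hρx⟩ <;>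
    rcases lt_iff.1 h₂ with ⟨hστ, H₂⟩ | ⟨hτσ, y, hy, hσy⟩
  · refine .left (hρσ.trans hστ) fun x hx => ?_
    have := IsBH.Lv_ι_lt hD hx
    exact lt_of_lt_of_le (by omega) (H₁ x hx) (.inl h₂)
  · have := IsBH.Lv_ι_lt hD hy
    rcases lt_trichotomy ρ τ with hρτ | rfl | hτρ
    · refine .left hρτ fun x hx => ?_
      have := IsBH.Lv_ι_lt hD hx
      exact lt_of_lt_of_le (by omega) (H₁ x hx) (.inl h₂)
    · exact absurd (lt_of_lt_of_le (by omega) (H₁ y hy) hσy) (lt_irrefl _)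
    · exact lt_of_le_ι hτρ hy (.inl (lt_of_lt_of_le (by omega) h₁ hσy))
  · have := IsBH.Lv_ι_lt hD hx
    rcases hρx with hρx | rfl
    exacts [IsBH.lt_trans hD hρx (H₂ x hx), H₂ x hx]
  · have := IsBH.Lv_ι_lt hD hy
    exact lt_of_le_ι (hτσ.trans hσρ) hy (.inl (lt_of_lt_of_le (by omega) h₁ hσy))
termination_by D.Lv ρ + D.Lv σ + D.Lv τ

theorem IsBH.lt_or_lt_of_lt (hD : D.IsBH) {σ τ : S} (h : σ < τ) : D.lt σ τ ∨ D.lt τ σ := by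
  by_cases H : ∀ x ∈ D.supp σ, D.lt (D.ι x) τ
  · exact .inl (.left h H)
  obtain ⟨x, hx, hxτ⟩ := not_forall₂.1 H
  have := IsBH.Lv_ι_lt hD hx
  refine .inr (lt_of_le_ι h hx ?_)
  rcases lt_trichotomy (D.ι x) τ with hlt | heq | hgt
  · exact .inl ((IsBH.lt_or_lt_of_lt hD hlt).resolve_left hxτ)
  · exact .inr heq.symm
  · exact .inl ((IsBH.lt_or_lt_of_lt hD hgt).resolve_right hxτ)
termination_by D.Lv σ + D.Lv τ

end BHData

/-- Transitivity of the collapse order of a Bachmann-Howard system; hence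
`(ϑ_T(X), <_{ϑ_T(X)})` is a linear (strict total) order. -/
theorem BHData.lt_trans (D : BHData X S) (hD : D.IsBH) :
    (∀ ρ σ τ : S, D.lt ρ σ → D.lt σ τ → D.lt ρ τ) ∧ IsStrictTotalOrder S D.lt := by
  have : IsStrictOrder S D.lt := { irrefl := D.lt_irrefl, trans := fun _ _ _ => IsBH.lt_trans hD }
  refine ⟨fun _ _ _ => IsBH.lt_trans hD, { trichotomous := fun σ τ hστ hτσ => ?_ }⟩
  by_contra hne
  rcases lt_or_gt_of_ne hne with h | h
  · exact (IsBH.lt_or_lt_of_lt hD h).elim hστ hτσ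
  · exact (IsBH.lt_or_lt_of_lt hD h).elim hτσ hστ
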